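/- arXiv:2307.02793 — 2 statements merged into one kernel-verified Lean document; each statement's English description precedes it below -/
import Mathlib

section
/- For 0 < β < 1 and m > 0 with ρ = β/(1-β), the identity Σ_{η=0}^∞ λ^η Σ_{k=1}^η G_m(η-k)·(β^k/k) = [log(1+ρ) + log F_ρ(λ)] · F_m(λ) holds for all λ ∈ [0,1), where F_m(λ) = (1+(1-λ)m)^{-1} and F_ρ(λ) = (1+(1-λ)ρ)^{-1}. -/
noncomputable def geomPMF (m : ℝ) (k : ℕ) : ℝ := (1 / (1 + m)) * (m / (1 + m)) ^ k

noncomputable def geomMGF (m l : ℝ) : ℝ := (1 + (1 - l) * m)⁻¹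

/-!
The generating function of a convolution is the product of the generating functions. At `l`, the
geometric law has generating function `geomMGF m l`, while `k ↦ β ^ k / k` has generating function
`∑ (l β) ^ k / k = -log (1 - l β)`; since `(1 + ρ) * geomMGF ρ l = (1 - l β)⁻¹`, this logarithm is
`log (1 + ρ) + log (geomMGF ρ l)`.
-/

open Finset Real

section GeometricLaw

variable {m l : ℝ}

lemma pow_mul_geomPMF (m l : ℝ) (j : ℕ) :
    l ^ j * geomPMF m j = (1 + m)⁻¹ * (l * m / (1 + m)) ^ j := by
  rw [geomPMF, mul_div_assoc, mul_pow]
  ring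

lemma norm_mul_div_one_add_lt_one (hm : 0 ≤ m) (hl : |l| < 1) : ‖l * m / (1 + m)‖ < 1 := by
  have h1m : 0 < 1 + m := by linarith
  rw [norm_div, norm_mul, Real.norm_of_nonneg hm, Real.norm_of_nonneg h1m.le, Real.norm_eq_abs,
    div_lt_one h1m]
  nlinarith [abs_nonneg l]

lemma hasSum_pow_mul_geomPMF (hm : 0 ≤ m) (hl : |l| < 1) :
    HasSum (fun j ↦ l ^ j * geomPMF m j) (geomMGF m l) := by
  have hsum := (hasSum_geometric_of_norm_lt_one (norm_mul_div_one_add_lt_one hm hl)).mul_left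
    (1 + m)⁻¹
  have hmgf : (1 + m)⁻¹ * (1 - l * m / (1 + m))⁻¹ = geomMGF m l := by
    rw [geomMGF, ← mul_inv]
    congr 1
    field_simp
    ring
  simp_rw [pow_mul_geomPMF, ← hmgf]
  exact hsum

lemma summable_norm_pow_mul_geomPMF (hm : 0 ≤ m) (hl : |l| < 1) :
    Summable fun j ↦ ‖l ^ j * geomPMF m j‖ := by
  simp_rw [pow_mul_geomPMF, norm_mul, norm_pow]
  exact (summable_geometric_of_lt_one (norm_nonneg _) (norm_mul_div_one_add_lt_one hm hl)).mul_left _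

end GeometricLaw

section LogSeries

variable {x : ℝ}

lemma hasSum_pow_div_neg_log (hx : |x| < 1) :
    HasSum (fun k : ℕ ↦ x ^ k / k) (-log (1 - x)) := by
  have hshift := (hasSum_nat_add_iff (f := fun k : ℕ ↦ x ^ k / k) 1).mp
    (by exact_mod_cast hasSum_pow_div_log_of_abs_lt_one hx)
  simpa using hshift

lemma summable_norm_pow_div (hx : |x| < 1) : Summable fun k : ℕ ↦ ‖x ^ k / k‖ := by
  simp_rw [norm_div, norm_pow, Real.norm_eq_abs, Nat.abs_cast]
  exact (hasSum_pow_div_neg_log (x := |x|) (by rwa [abs_abs])).summable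

end LogSeries

/-- The `k = 0` term of the Cauchy product vanishes because `0 / 0 = 0` in `ℝ`. -/
lemma sum_range_succ_pow_div_mul (a : ℕ → ℝ) (l β : ℝ) (n : ℕ) :
    ∑ k ∈ range (n + 1), (l * β) ^ k / k * (l ^ (n - k) * a (n - k)) =
      l ^ n * ∑ k ∈ Icc 1 n, a (n - k) * β ^ k / k := by
  rw [range_eq_Ico, sum_eq_sum_Ico_succ_bot n.succ_pos, Nat.cast_zero, div_zero, zero_mul,
    zero_add, zero_add, Nat.succ_eq_add_one, Ico_add_one_right_eq_Icc, mul_sum]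
  refine sum_congr rfl fun k hk ↦ ?_
  have hpow : l ^ n = l ^ k * l ^ (n - k) := by
    rw [← pow_add, Nat.add_sub_cancel' (mem_Icc.mp hk).2]
  rw [hpow, mul_pow]
  ring

lemma hasSum_pow_mul_sum_Icc_pow_div {a : ℕ → ℝ} {A l β : ℝ}
    (ha : HasSum (fun j ↦ l ^ j * a j) A) (ha' : Summable fun j ↦ ‖l ^ j * a j‖)
    (hlβ : |l * β| < 1) :
    HasSum (fun n : ℕ ↦ l ^ n * ∑ k ∈ Icc 1 n, a (n - k) * β ^ k / k) (-log (1 - l * β) * A) := by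
  have hcauchy := hasSum_sum_range_mul_of_summable_norm (summable_norm_pow_div hlβ) ha'
  rw [(hasSum_pow_div_neg_log hlβ).tsum_eq, ha.tsum_eq] at hcauchy
  simpa only [sum_range_succ_pow_div_mul] using hcauchy

lemma log_one_add_add_log_geomMGF {β l : ℝ} (hβ : β < 1) (hlβ : l * β < 1) :
    log (1 + β / (1 - β)) + log (geomMGF (β / (1 - β)) l) = -log (1 - l * β) := by
  have hβ' : 1 - β ≠ 0 := by linarith
  have hlβ' : 1 - l * β ≠ 0 := by linarith
  have hρ : 1 + β / (1 - β) = (1 - β)⁻¹ := by field_simp; ring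
  have hmgf : geomMGF (β / (1 - β)) l = ((1 - l * β) / (1 - β))⁻¹ := by
    rw [geomMGF]; congr 1; field_simp; ring
  rw [hρ, hmgf, log_inv, log_inv, log_div hlβ' hβ']
  ring

theorem convolution_gen_fun (β : ℝ) (hβ0 : 0 < β) (hβ1 : β < 1) (m : ℝ) (hm : 0 < m)
    (ρ : ℝ) (hρ : ρ = β / (1 - β)) (l : ℝ) (hl0 : 0 ≤ l) (hl1 : l < 1) :
    ∑' η : ℕ, l ^ η * (∑ k ∈ Finset.Icc 1 η, geomPMF m (η - k) * β ^ k / (k : ℝ)) =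
      (Real.log (1 + ρ) + Real.log (geomMGF ρ l)) * geomMGF m l := by
  have hl : |l| < 1 := by rwa [abs_of_nonneg hl0]
  have hlβ : l * β < 1 := by nlinarith
  have hlβ_abs : |l * β| < 1 := by rwa [abs_of_nonneg (by positivity)]
  rw [hρ, log_one_add_add_log_geomMGF hβ1 hlβ]
  exact (hasSum_pow_mul_sum_Icc_pow_div (hasSum_pow_mul_geomPMF hm.le hl)
    (summable_norm_pow_mul_geomPMF hm.le hl) hlβ_abs).tsum_eq
end

section
/- Let 0 < T_A < T_B, N ≥ 1, t_1,...,t_N < 0, F_m(t) = (1-tm)^{-1}, with conventions m_0 = T_A, m_{N+1} = T_B, and O_N = {T_A ≤ m_1 ≤ ... ≤ m_N ≤ T_B}. Then for each x ∈ {1,...,N}, ∫_{O_N} [log F_{m_{x-1}}(t_x) - 2·log F_{m_x}(t_x) + log F_{m_{x+1}}(t_x)] · Π_{y=1}^N F_{m_y}(t_y) dm = 0. -/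
/-!
Integrate first in `m_x` with the other coordinates fixed. On the ordered simplex it ranges over
`[m_{x-1}, m_{x+1}]` and only the factor `F_{m_x}(t_x)` of the product depends on it. With
`L(u) = log F_u(t_x)` one has `F_u(t_x) = L'(u) / t_x`, so the inner integral is
`t_x⁻¹ ∫ (L(m_{x-1}) - 2 L(u) + L(m_{x+1})) L'(u) du`, and this integrand has the antiderivative
`-(L(u) - L(m_{x-1})) (L(u) - L(m_{x+1}))`, which vanishes at both endpoints. Fubini's theorem
concludes (a non-integrable integrand has integral `0` by convention).
-/

noncomputable def expMGF (m t : ℝ) : ℝ := (1 - t * m)⁻¹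

/-- Extension of a configuration `m : Fin N → ℝ` by the boundary values `a` at index `0`
and `b` at index `N+1`; index `i ∈ {1,…,N}` gives `m (i-1)`. -/
noncomputable def extSeq (a b : ℝ) (N : ℕ) (m : Fin N → ℝ) (i : ℕ) : ℝ :=
  if h : 1 ≤ i ∧ i ≤ N then m ⟨i - 1, by omega⟩ else if i = 0 then a else b

/-- The ordered simplex `{a ≤ m 0 ≤ … ≤ m (N-1) ≤ b}`. -/
def orderedSimplex (a b : ℝ) (N : ℕ) : Set (Fin N → ℝ) :=
  {m | Monotone m ∧ ∀ i, m i ∈ Set.Icc a b}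

open MeasureTheory Function Set

lemma monotone_update_iff {α : Type*} [Preorder α] {s : ℕ → α} (hs : Monotone s) (k : ℕ) (w : α) :
    Monotone (update s (k + 1) w) ↔ s k ≤ w ∧ w ≤ s (k + 2) := by
  refine ⟨fun h => ⟨by simpa using h (Nat.le_succ k), by simpa using h (Nat.le_succ (k + 1))⟩,
    fun ⟨hkw, hwk⟩ => monotone_nat_of_le_succ fun j => ?_⟩
  rcases lt_trichotomy j k with hj | rfl | hj
  · rw [update_of_ne (by omega), update_of_ne (by omega)]
    exact hs j.le_succ
  · simpa using hkw
  · rcases eq_or_lt_of_le (Nat.succ_le_of_lt hj) with rfl | hj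
    · simpa using hwk
    · rw [update_of_ne (by omega), update_of_ne (by omega)]
      exact hs j.le_succ

section OrderedSimplex

variable {a b : ℝ} {N : ℕ}

@[simp]
lemma extSeq_zero (m : Fin N → ℝ) : extSeq a b N m 0 = a := by
  simp [extSeq]

@[simp]
lemma extSeq_succ (m : Fin N → ℝ) (i : Fin N) : extSeq a b N m (i + 1) = m i := by
  simp [extSeq, Nat.succ_le_of_lt i.isLt]

lemma extSeq_of_lt (m : Fin N → ℝ) {k : ℕ} (hk : N < k) : extSeq a b N m k = b := by
  rw [extSeq, dif_neg (by omega), if_neg (by omega)]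

lemma extSeq_update (m : Fin N → ℝ) (i : Fin N) (u : ℝ) :
    extSeq a b N (update m i u) = update (extSeq a b N m) (i + 1) u := by
  funext k
  by_cases hk : 1 ≤ k ∧ k ≤ N
  · obtain ⟨j, rfl⟩ : ∃ j : Fin N, k = j + 1 := ⟨⟨k - 1, by omega⟩, by simp; omega⟩
    simp [update_apply, Fin.val_inj]
  · have hki : k ≠ i + 1 := by omega
    simp [extSeq, hk, hki]

lemma isClosed_orderedSimplex : IsClosed (orderedSimplex a b N) := by
  simp only [orderedSimplex, ofPred_and, ofPred_forall]
  exact isClosed_monotone.inter (isClosed_iInter fun i => isClosed_Icc.preimage (continuous_apply i))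

lemma mem_orderedSimplex_iff_monotone_extSeq (hN : 0 < N) (m : Fin N → ℝ) :
    m ∈ orderedSimplex a b N ↔ Monotone (extSeq a b N m) := by
  constructor
  · rintro ⟨hm, hab⟩
    refine monotone_nat_of_le_succ fun k => ?_
    unfold extSeq
    split_ifs <;> first
      | contradiction
      | omega
      | exact hm (Fin.mk_le_mk.mpr (by omega))
      | exact (hab _).1
      | exact (hab _).2
      | exact le_rfl
  · intro hs
    refine ⟨fun p q hpq => ?_, fun j => ⟨?_, ?_⟩⟩
    · simpa using hs (Nat.succ_le_succ hpq)
    · simpa using hs (Nat.zero_le (j + 1))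
    · simpa [extSeq_of_lt m (Nat.lt_succ_self N)] using hs (Nat.succ_le_succ j.isLt.le)

end OrderedSimplex

lemma update_mem_orderedSimplex_iff {a b : ℝ} {N : ℕ} {m : Fin N → ℝ}
    (hm : m ∈ orderedSimplex a b N) (i : Fin N) (u : ℝ) :
    update m i u ∈ orderedSimplex a b N ↔
      u ∈ Icc (extSeq a b N m i) (extSeq a b N m (i + 2)) := by
  rw [mem_orderedSimplex_iff_monotone_extSeq i.pos] at hm ⊢
  rw [extSeq_update, monotone_update_iff hm, mem_Icc]

section OneDimensional

open intervalIntegral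

lemma integral_secondDiff_mul_deriv_eq_zero {L L' : ℝ → ℝ} {A B : ℝ}
    (hL : ∀ u ∈ uIcc A B, HasDerivAt L (L' u) u) (hL' : IntervalIntegrable L' volume A B) :
    ∫ u in A..B, (L A - 2 * L u + L B) * L' u = 0 := by
  have hG : ∀ u ∈ uIcc A B, HasDerivAt (fun w => -((L w - L A) * (L w - L B)))
      ((L A - 2 * L u + L B) * L' u) u := fun u hu =>
    (((hL u hu).sub_const (L A)).mul ((hL u hu).sub_const (L B))).neg.congr_deriv (by ring)
  have hcont : ContinuousOn (fun u => L A - 2 * L u + L B) (uIcc A B) :=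
    (continuousOn_const.sub (continuousOn_const.mul
      (HasDerivAt.continuousOn hL))).add continuousOn_const
  rw [integral_eq_sub_of_hasDerivAt hG (hL'.continuousOn_mul hcont)]
  ring

variable {t : ℝ}

lemma hasDerivAt_log_expMGF {u : ℝ} (hu : 0 < 1 - t * u) :
    HasDerivAt (fun w => Real.log (expMGF w t)) (t * expMGF u t) u := by
  have hlog : (fun w => Real.log (expMGF w t)) = fun w => -Real.log (1 - t * w) :=
    funext fun w => by simp [expMGF, Real.log_inv]
  rw [hlog]
  refine (((hasDerivAt_id' u).const_mul t).const_sub 1 |>.log hu.ne').neg.congr_deriv ?_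
  simp only [expMGF]
  field_simp

lemma integral_secondDiff_log_expMGF_mul_expMGF_eq_zero (ht : t < 0) {A B : ℝ} (hA : 0 < A)
    (hB : 0 < B) :
    ∫ u in A..B, (Real.log (expMGF A t) - 2 * Real.log (expMGF u t) +
      Real.log (expMGF B t)) * expMGF u t = 0 := by
  have hpos : ∀ u ∈ uIcc A B, 0 < 1 - t * u := fun u hu => by
    nlinarith [lt_of_lt_of_le (lt_min hA hB) hu.1]
  have hcont : ContinuousOn (fun u => t * expMGF u t) (uIcc A B) :=
    continuousOn_const.mul <| ((continuousOn_const.sub (continuousOn_const.mul continuousOn_id)).inv₀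
      fun u hu => (hpos u hu).ne')
  have h := integral_secondDiff_mul_deriv_eq_zero (fun u hu => hasDerivAt_log_expMGF (hpos u hu))
    hcont.intervalIntegrable
  simp_rw [mul_left_comm _ t, intervalIntegral.integral_const_mul] at h
  exact (mul_eq_zero.mp h).resolve_left ht.ne

end OneDimensional

lemma integral_eq_zero_of_integral_update_eq_zero {E : Type*} [NormedAddCommGroup E]
    [NormedSpace ℝ E] {n : ℕ} (i : Fin (n + 1)) (g : (Fin (n + 1) → ℝ) → E)
    (h : ∀ m, ∫ u, g (update m i u) = 0) : ∫ m, g m = 0 := by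
  by_cases hg : Integrable g
  swap
  · exact integral_undef hg
  have he := (volume_preserving_piFinSuccAbove (fun _ : Fin (n + 1) => ℝ) i).symm
  have hg' := (he.integrable_comp_emb (MeasurableEquiv.measurableEmbedding _)).2 hg
  rw [Measure.volume_eq_prod] at hg'
  have hslice (v : Fin n → ℝ) : ∫ u, g (i.insertNth u v) = 0 := by
    simpa using h (i.insertNth 0 v)
  rw [← he.integral_comp (MeasurableEquiv.measurableEmbedding _), Measure.volume_eq_prod]
  exact (integral_prod_symm _ hg').trans (by simp [Fin.insertNthEquiv, hslice])

noncomputable def stationaritySummand (N : ℕ) (t : ℕ → ℝ) (x : ℕ) (s : ℕ → ℝ) : ℝ :=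
  (Real.log (expMGF (s (x - 1)) (t x)) - 2 * Real.log (expMGF (s x) (t x)) +
    Real.log (expMGF (s (x + 1)) (t x))) * ∏ y ∈ Finset.Icc 1 N, expMGF (s y) (t y)

lemma stationaritySummand_update {N : ℕ} (t : ℕ → ℝ) {x : ℕ} (hx : x ∈ Finset.Icc 1 N)
    (s : ℕ → ℝ) (u : ℝ) :
    stationaritySummand N t x (update s x u) =
      (Real.log (expMGF (s (x - 1)) (t x)) - 2 * Real.log (expMGF u (t x)) +
        Real.log (expMGF (s (x + 1)) (t x))) *
      (expMGF u (t x) * ∏ y ∈ Finset.Icc 1 N \ {x}, expMGF (s y) (t y)) := by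
  have hx1 : x - 1 ≠ x := by have := (Finset.mem_Icc.mp hx).1; omega
  simp only [stationaritySummand, update_of_ne hx1, update_of_ne x.succ_ne_self, update_self,
    apply_update (fun y r => expMGF r (t y)), Finset.prod_update_of_mem hx]

lemma integral_indicator_stationaritySummand_update {a b : ℝ} (ha : 0 < a) {N : ℕ}
    {t : ℕ → ℝ} {i : Fin N} (ht : t (i + 1) < 0) {m : Fin N → ℝ}
    (hm : m ∈ orderedSimplex a b N) :
    ∫ u, (orderedSimplex a b N).indicator
      (fun m => stationaritySummand N t (i + 1) (extSeq a b N m)) (update m i u) = 0 := by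
  set s := extSeq a b N m
  have hs : Monotone s := (mem_orderedSimplex_iff_monotone_extSeq i.pos m).1 hm
  set P := ∏ y ∈ Finset.Icc 1 N \ {(i : ℕ) + 1}, expMGF (s y) (t y)
  have hsection (u : ℝ) :
      (orderedSimplex a b N).indicator
        (fun m => stationaritySummand N t (i + 1) (extSeq a b N m)) (update m i u) =
      (Icc (s i) (s (i + 2))).indicator (fun u => (Real.log (expMGF (s i) (t (i + 1))) -
        2 * Real.log (expMGF u (t (i + 1))) + Real.log (expMGF (s (i + 2)) (t (i + 1)))) *
          expMGF u (t (i + 1)) * P) u := by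
    have hx : (i : ℕ) + 1 ∈ Finset.Icc 1 N := Finset.mem_Icc.mpr ⟨by omega, i.isLt⟩
    classical
    simp only [indicator_apply, update_mem_orderedSimplex_iff hm, extSeq_update,
      stationaritySummand_update t hx, Nat.add_sub_cancel, mul_assoc]
    rfl
  have hsi : 0 < s i := ha.trans_le (by simpa [s] using hs (Nat.zero_le i))
  have hsi2 : 0 < s (i + 2) := hsi.trans_le (hs (by omega))
  simp_rw [hsection]
  rw [integral_indicator measurableSet_Icc, integral_Icc_eq_integral_Ioc,
    ← intervalIntegral.integral_of_le (hs (by omega)), intervalIntegral.integral_mul_const,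
    integral_secondDiff_log_expMGF_mul_expMGF_eq_zero ht hsi hsi2, zero_mul]

theorem stationarity_summand_zero_exp_general (TA TB : ℝ) (hA : 0 < TA)
    (N : ℕ) (t : ℕ → ℝ) (ht : ∀ x ∈ Finset.Icc 1 N, t x < 0)
    (x : ℕ) (hx : x ∈ Finset.Icc 1 N) :
    ∫ m in orderedSimplex TA TB N,
      (Real.log (expMGF (extSeq TA TB N m (x - 1)) (t x)) -
        2 * Real.log (expMGF (extSeq TA TB N m x) (t x)) +
        Real.log (expMGF (extSeq TA TB N m (x + 1)) (t x))) *
      ∏ y ∈ Finset.Icc 1 N, expMGF (extSeq TA TB N m y) (t y) = 0 := by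
  have htx := ht x hx
  obtain ⟨hx1, hxN⟩ := Finset.mem_Icc.mp hx
  obtain ⟨n, rfl⟩ : ∃ n, N = n + 1 := ⟨N - 1, by omega⟩
  obtain ⟨i, rfl⟩ : ∃ i : Fin (n + 1), x = i + 1 := ⟨⟨x - 1, by omega⟩, by simp; omega⟩
  rw [← integral_indicator isClosed_orderedSimplex.measurableSet]
  refine integral_eq_zero_of_integral_update_eq_zero i _ fun m => ?_
  by_cases hnonempty : ∃ u, update m i u ∈ orderedSimplex TA TB (n + 1)
  · obtain ⟨u₀, hu₀⟩ := hnonempty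
    have h := integral_indicator_stationaritySummand_update hA htx hu₀
    simp only [update_idem] at h
    exact h
  · simp [indicator_of_notMem (not_exists.mp hnonempty _)]

theorem stationarity_summand_zero_exp (TA TB : ℝ) (hA : 0 < TA) (hAB : TA < TB)
    (N : ℕ) (hN : 1 ≤ N) (t : ℕ → ℝ) (ht : ∀ x ∈ Finset.Icc 1 N, t x < 0)
    (x : ℕ) (hx : x ∈ Finset.Icc 1 N) :
    ∫ m in orderedSimplex TA TB N,
      (Real.log (expMGF (extSeq TA TB N m (x - 1)) (t x)) -
        2 * Real.log (expMGF (extSeq TA TB N m x) (t x)) +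
        Real.log (expMGF (extSeq TA TB N m (x + 1)) (t x))) *
      ∏ y ∈ Finset.Icc 1 N, expMGF (extSeq TA TB N m y) (t y) = 0 :=
  stationarity_summand_zero_exp_general TA TB hA N t ht x hx
end
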